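/- For every h ∈ ℋ there exist a unique real number v and a unique h⁰ ∈ ℋ₀ such that h_n = v / √(2n+1) + h⁰_n for all n ≥ 0; moreover v = (π/2)^{−1/2} ∑_{k≥0} f_k, where f ∈ ℓ²_{3/4} is the representing sequence of h, and the mapping h ↦ (v, h⁰) is a bounded linear isomorphism between ℋ and ℝ × ℋ₀ (with bounded inverse). -/

import Mathlib

open MeasureTheory Filter Finset

/-- `E_m = (2m)! / (2^(2m) (m!)^2)`, the Taylor coefficients of `(1-z)^(-1/2)`. -/
noncomputable def Ecoef (m : ℕ) : ℝ :=
  (Nat.factorial (2*m)) / (2^(2*m) * (Nat.factorial m)^2)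

/-- Membership in the weighted space `ℓ²_r`:  `∑ (1+n)^(2r) |c_n|² < ∞`. -/
def InEll2 (r : ℝ) (c : ℕ → ℝ) : Prop :=
  Summable (fun n : ℕ => ((1:ℝ) + n) ^ (2*r) * (c n)^2)

/-- The norm of the weighted space `ℓ²_r`. -/
noncomputable def ell2Norm (r : ℝ) (c : ℕ → ℝ) : ℝ :=
  Real.sqrt (∑' n : ℕ, ((1:ℝ) + n) ^ (2*r) * (c n)^2)

/-- Membership in the space `ℋ`: `h_n = ∑_{k=0}^n E_{n-k} f_k` for some `f ∈ ℓ²_{3/4}`. -/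
def InH (h : ℕ → ℝ) : Prop :=
  ∃ f : ℕ → ℝ, InEll2 (3/4) f ∧
    ∀ n, h n = ∑ k ∈ Finset.range (n+1), Ecoef (n-k) * f k

/-- Membership in the subspace `ℋ₀ ⊂ ℋ`: the representing sequence additionally satisfies
`∑ f_k = 0` (the series converges absolutely). -/
def InH0 (h : ℕ → ℝ) : Prop :=
  ∃ f : ℕ → ℝ, InEll2 (3/4) f ∧ Summable (fun k => |f k|) ∧ (∑' k, f k) = 0 ∧
    ∀ n, h n = ∑ k ∈ Finset.range (n+1), Ecoef (n-k) * f k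

-- The norm `‖h‖_ℋ = ‖f‖_{ℓ²_{3/4}}` of `h ∈ ℋ`, via its (unique) representing sequence.
open scoped Classical in
noncomputable def Hnorm (h : ℕ → ℝ) : ℝ :=
  if hh : InH h then ell2Norm (3/4) (Classical.choose hh) else 0

lemma Ecoef_zero : Ecoef 0 = 1 := by simp [Ecoef]

lemma Ecoef_pos (m : ℕ) : 0 < Ecoef m := by
  unfold Ecoef
  positivity

lemma Ecoef_succ (m : ℕ) : (2*(m:ℝ)+2) * Ecoef (m+1) = (2*m+1) * Ecoef m := by
  unfold Ecoef
  have h1 : 2*(m+1) = 2*m+1+1 := by ring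
  rw [h1, Nat.factorial_succ, Nat.factorial_succ, Nat.factorial_succ]
  have hf : ((Nat.factorial m : ℝ)) ≠ 0 := Nat.cast_ne_zero.2 (Nat.factorial_ne_zero m)
  have hp : ((2:ℝ) ^ (2*m)) ≠ 0 := by positivity
  push_cast
  field_simp
  ring

lemma A_eq_one : ∀ n : ℕ, (∑ k ∈ range (n+1), Ecoef k * Ecoef (n-k)) = 1 := by
  have key : ∀ n : ℕ, (∑ k ∈ range (n+1), (2*(k:ℝ)+1) * (Ecoef k * Ecoef (n-k)))
      = ((n:ℝ)+1) * ∑ k ∈ range (n+1), Ecoef k * Ecoef (n-k) := by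
    intro n
    have hrefl : (∑ k ∈ range (n+1), (2*(k:ℝ)+1) * (Ecoef k * Ecoef (n-k)))
        = ∑ k ∈ range (n+1), (2*((n:ℝ)-k)+1) * (Ecoef (n-k) * Ecoef k) := by
      rw [← Finset.sum_range_reflect]
      apply Finset.sum_congr rfl
      intro k hk
      have hk' : k ≤ n := Nat.lt_succ_iff.mp (Finset.mem_range.mp hk)
      have h1 : n + 1 - 1 - k = n - k := by omega
      have h2 : n - (n - k) = k := by omega
      rw [h1, h2]
      have : ((n - k : ℕ) : ℝ) = (n:ℝ) - k := by
        rw [Nat.cast_sub hk']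
      rw [this]
    have : (2:ℝ) * (∑ k ∈ range (n+1), (2*(k:ℝ)+1) * (Ecoef k * Ecoef (n-k)))
        = (2*(n:ℝ)+2) * ∑ k ∈ range (n+1), Ecoef k * Ecoef (n-k) := by
      rw [two_mul]
      nth_rewrite 2 [hrefl]
      rw [Finset.mul_sum, ← Finset.sum_add_distrib]
      apply Finset.sum_congr rfl
      intro k _
      ring
    linarith
  intro n
  induction n with
  | zero => simp [Ecoef_zero]
  | succ n ih =>
    have claim2 : (∑ k ∈ range (n+2), (2*(k:ℝ)) * (Ecoef k * Ecoef (n+1-k)))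
        = ((n:ℝ)+1) * ∑ k ∈ range (n+1), Ecoef k * Ecoef (n-k) := by
      rw [Finset.sum_range_succ' (fun k => (2*(k:ℝ)) * (Ecoef k * Ecoef (n+1-k))) (n+1)]
      simp only [Nat.cast_zero, mul_zero, zero_mul, add_zero]
      rw [← key n]
      apply Finset.sum_congr rfl
      intro k hk
      have hk' : k ≤ n := Nat.lt_succ_iff.mp (Finset.mem_range.mp hk)
      have h1 : n + 1 - (k+1) = n - k := by omega
      rw [h1]
      push_cast
      linear_combination Ecoef (n-k) * Ecoef_succ k
    have keyn1 := key (n+1)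
    have expand : (∑ k ∈ range (n+2), (2*(k:ℝ)+1) * (Ecoef k * Ecoef (n+1-k)))
        = (∑ k ∈ range (n+2), (2*(k:ℝ)) * (Ecoef k * Ecoef (n+1-k)))
          + ∑ k ∈ range (n+2), Ecoef k * Ecoef (n+1-k) := by
      rw [← Finset.sum_add_distrib]
      apply Finset.sum_congr rfl
      intro k _
      ring
    push_cast at keyn1 ⊢
    rw [expand, claim2, ih] at keyn1
    -- keyn1 : (n+1)*1 + S = (n+2)*S  where S = ∑ range (n+2)
    have : ((n:ℝ)+1) * (∑ k ∈ range (n+2), Ecoef k * Ecoef (n+1-k)) = ((n:ℝ)+1) * 1 := by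
      linarith
    have hn1 : ((n:ℝ)+1) ≠ 0 := by positivity
    field_simp at this
    linarith [this]
noncomputable def sCoef : ℕ → ℝ
  | 0 => 1
  | (m+1) => Ecoef (m+1) - Ecoef m

lemma sCoef_succ (m : ℕ) : sCoef (m+1) = Ecoef (m+1) - Ecoef m := rfl

/-- convolution in the "a (n-k) * b k" orientation equals power series coefficient -/
lemma coeff_mk_mul (a b : ℕ → ℝ) (n : ℕ) :
    PowerSeries.coeff (R := ℝ) n (PowerSeries.mk a * PowerSeries.mk b)
      = ∑ k ∈ range (n+1), a (n-k) * b k := by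
  rw [PowerSeries.coeff_mul, Finset.Nat.sum_antidiagonal_eq_sum_range_succ_mk]
  rw [← Finset.sum_range_reflect]
  apply Finset.sum_congr rfl
  intro k hk
  have hk' : k ≤ n := Nat.lt_succ_iff.mp (Finset.mem_range.mp hk)
  have h1 : n + 1 - 1 - k = n - k := by omega
  have h2 : n - (n - k) = k := by omega
  simp only [PowerSeries.coeff_mk, h1, h2]

lemma conv_Es (n : ℕ) :
    ∑ k ∈ range (n+1), Ecoef (n-k) * sCoef k = if n = 0 then 1 else 0 := by
  cases n with
  | zero => simp [sCoef, Ecoef_zero]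
  | succ m =>
    simp only [Nat.succ_ne_zero, if_false]
    rw [Finset.sum_range_succ' (fun k => Ecoef (m+1-k) * sCoef k) (m+1)]
    simp only [Nat.sub_zero, sCoef]
    have hsplit : ∀ k ∈ range (m+1),
        Ecoef (m+1-(k+1)) * (Ecoef (k+1) - Ecoef k)
          = Ecoef (m-k) * Ecoef (k+1) - Ecoef (m-k) * Ecoef k := by
      intro k hk
      have h1 : m + 1 - (k+1) = m - k := by omega
      rw [h1]; ring
    rw [Finset.sum_congr rfl hsplit, Finset.sum_sub_distrib]
    have e1 : ∑ k ∈ range (m+1), Ecoef (m-k) * Ecoef (k+1)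
        = (∑ k ∈ range (m+2), Ecoef (m+1-k) * Ecoef k) - Ecoef (m+1) * Ecoef 0 := by
      rw [Finset.sum_range_succ' (fun k => Ecoef (m+1-k) * Ecoef k) (m+1)]
      simp only [Nat.sub_zero]
      have : ∀ k ∈ range (m+1), Ecoef (m+1-(k+1)) * Ecoef (k+1) = Ecoef (m-k) * Ecoef (k+1) := by
        intro k hk
        have h1 : m + 1 - (k+1) = m - k := by omega
        rw [h1]
      rw [Finset.sum_congr rfl this]
      ring
    have e2 : ∑ k ∈ range (m+1), Ecoef (m-k) * Ecoef k = 1 := by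
      have := A_eq_one m
      rw [← this, ← Finset.sum_range_reflect]
      apply Finset.sum_congr rfl
      intro k hk
      have hk' : k ≤ m := Nat.lt_succ_iff.mp (Finset.mem_range.mp hk)
      have h1 : m + 1 - 1 - k = m - k := by omega
      have h2 : m - (m - k) = k := by omega
      rw [h1, h2]
    have e3 : ∑ k ∈ range (m+2), Ecoef (m+1-k) * Ecoef k = 1 := by
      have := A_eq_one (m+1)
      rw [← this, ← Finset.sum_range_reflect]
      apply Finset.sum_congr rfl
      intro k hk
      have hk' : k ≤ m+1 := Nat.lt_succ_iff.mp (Finset.mem_range.mp hk)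
      have h1 : m + 1 + 1 - 1 - k = m + 1 - k := by omega
      have h2 : m + 1 - (m + 1 - k) = k := by omega
      rw [h1, h2]
    rw [e1, e2, e3, Ecoef_zero]
    ring

lemma ES_mul_SS : PowerSeries.mk Ecoef * PowerSeries.mk sCoef = 1 := by
  ext n
  rw [coeff_mk_mul]
  rw [conv_Es]
  simp [PowerSeries.coeff_one]

/-- inverse property: for any sequence u, convolving s*u then E* gives back u -/
lemma conv_inv (u : ℕ → ℝ) (n : ℕ) :
    ∑ k ∈ range (n+1), Ecoef (n-k) *
      (∑ j ∈ range (k+1), sCoef (k-j) * u j) = u n := by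
  have h2 : ∑ k ∈ range (n+1), Ecoef (n-k) *
      (∑ j ∈ range (k+1), sCoef (k-j) * u j)
      = PowerSeries.coeff (R := ℝ) n (PowerSeries.mk Ecoef *
          (PowerSeries.mk sCoef * PowerSeries.mk u)) := by
    rw [show (PowerSeries.mk Ecoef * (PowerSeries.mk sCoef * PowerSeries.mk u))
        = PowerSeries.mk Ecoef * PowerSeries.mk
            (fun k => PowerSeries.coeff (R := ℝ) k (PowerSeries.mk sCoef * PowerSeries.mk u)) by
      congr 1
      ext j
      simp [PowerSeries.coeff_mk]]
    rw [coeff_mk_mul]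
    apply Finset.sum_congr rfl
    intro k _
    rw [coeff_mk_mul]
  rw [h2, ← mul_assoc, ES_mul_SS, one_mul, PowerSeries.coeff_mk]
open Real in
lemma W_Ecoef (k : ℕ) : Real.Wallis.W k * ((2*(k:ℝ)+1) * Ecoef k ^ 2) = 1 := by
  rw [Real.Wallis.W_eq_factorial_ratio]
  unfold Ecoef
  have hf : ((Nat.factorial k : ℝ)) ≠ 0 := Nat.cast_ne_zero.2 (Nat.factorial_ne_zero k)
  have hf2 : ((Nat.factorial (2*k) : ℝ)) ≠ 0 := Nat.cast_ne_zero.2 (Nat.factorial_ne_zero _)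
  have h1 : ((2:ℝ)*k+1) ≠ 0 := by positivity
  have h2 : ((2:ℝ))^(4*k) = (2^(2*k))^2 := by rw [← pow_mul]; ring_nf
  field_simp
  rw [h2]

lemma Esq_lower (k : ℕ) : 1/(2*(k:ℝ)+1) ≤ (Real.pi/2) * Ecoef k ^ 2 := by
  have hW := Real.Wallis.W_le k
  have hid := W_Ecoef k
  have h1 : (0:ℝ) < 2*(k:ℝ)+1 := by positivity
  have hE := Ecoef_pos k
  have hWpos := Real.Wallis.W_pos k
  rw [div_le_iff₀ h1]
  nlinarith [Real.pi_pos]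

lemma Esq_upper (k : ℕ) : (Real.pi/2) * Ecoef k ^ 2 ≤ (2*(k:ℝ)+2)/((2*(k:ℝ)+1)^2) := by
  have hW := Real.Wallis.le_W k
  have hid := W_Ecoef k
  have h1 : (0:ℝ) < 2*(k:ℝ)+1 := by positivity
  have h2 : (0:ℝ) < 2*(k:ℝ)+2 := by positivity
  have hE := Ecoef_pos k
  have hW' : (2*(k:ℝ)+1)*(Real.pi/2) ≤ (2*(k:ℝ)+2) * Real.Wallis.W k := by
    rw [div_mul_eq_mul_div, div_le_iff₀ h2] at hW
    linarith
  rw [le_div_iff₀ (by positivity)]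
  have hpos : (0:ℝ) ≤ (2*(k:ℝ)+1) * Ecoef k ^2 := by positivity
  calc Real.pi/2 * Ecoef k ^2 * (2*(k:ℝ)+1)^2
      = ((2*(k:ℝ)+1)*(Real.pi/2)) * ((2*(k:ℝ)+1) * Ecoef k ^2) := by ring
    _ ≤ ((2*(k:ℝ)+2) * Real.Wallis.W k) * ((2*(k:ℝ)+1) * Ecoef k ^2) :=
        mul_le_mul_of_nonneg_right hW' hpos
    _ = (2*(k:ℝ)+2) * (Real.Wallis.W k * ((2*(k:ℝ)+1) * Ecoef k ^2)) := by ring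
    _ = 2*(k:ℝ)+2 := by rw [hid]; ring

lemma Ecoef_le (k : ℕ) : Ecoef k ≤ Real.sqrt 2 / Real.sqrt ((k:ℝ)+1) := by
  have h2 : Ecoef k ^ 2 ≤ 2/((k:ℝ)+1) := by
    have hu := Esq_upper k
    have hpi : (1:ℝ) ≤ Real.pi/2 := by
      have := Real.pi_gt_three
      linarith
    have hE2 : Ecoef k ^2 ≤ (Real.pi/2) * Ecoef k ^2 := by
      nlinarith [sq_nonneg (Ecoef k)]
    have hstep : (2*(k:ℝ)+2)/((2*(k:ℝ)+1)^2) ≤ 2/((k:ℝ)+1) := by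
      rw [div_le_div_iff₀ (by positivity) (by positivity)]
      nlinarith [sq_nonneg ((k:ℝ))]
    linarith
  have hE := Ecoef_pos k
  calc Ecoef k = Real.sqrt (Ecoef k ^2) := (Real.sqrt_sq hE.le).symm
    _ ≤ Real.sqrt (2/((k:ℝ)+1)) := Real.sqrt_le_sqrt h2
    _ = Real.sqrt 2 / Real.sqrt ((k:ℝ)+1) := Real.sqrt_div (by norm_num) _

-- the weight-inverse sequence
noncomputable def iw (n : ℕ) : ℝ := (((1:ℝ)+n)) ^ (-(3:ℝ)/2)

lemma iw_eq (n : ℕ) : iw n = ((((1:ℝ)+n)) * Real.sqrt ((1:ℝ)+n))⁻¹ := by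
  have h1 : (0:ℝ) < 1+n := by positivity
  rw [iw, show (-(3:ℝ)/2) = -((3:ℝ)/2) by ring, Real.rpow_neg h1.le]
  congr 1
  rw [show ((3:ℝ)/2) = 1 + 1/2 by norm_num, Real.rpow_add h1, Real.rpow_one,
    Real.sqrt_eq_rpow]
lemma iw_pos (n : ℕ) : 0 < iw n := by
  unfold iw
  positivity

lemma iw_zero : iw 0 = 1 := by simp [iw]

lemma iw_antitone {a b : ℕ} (h : a ≤ b) : iw b ≤ iw a := by
  unfold iw
  have hc : ((a:ℝ)) ≤ (b:ℝ) := Nat.cast_le.2 h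
  apply Real.rpow_le_rpow_of_nonpos (by positivity) (by linarith)
  norm_num

lemma iw_le_one (n : ℕ) : iw n ≤ 1 := by
  simpa [iw_zero] using iw_antitone (Nat.zero_le n)

lemma summable_iw : Summable iw := by
  have h : Summable (fun n : ℕ => ((n:ℝ)) ^ (-(3:ℝ)/2)) := by
    rw [Real.summable_nat_rpow]
    norm_num
  have h2 := (summable_nat_add_iff 1).2 h
  apply h2.congr
  intro n
  unfold iw
  congr 1
  push_cast
  ring

noncomputable def Zc : ℝ := ∑' n, iw n

lemma Zc_pos : 0 < Zc := by
  have : 0 < iw 0 := iw_pos 0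
  have hle := Summable.sum_le_tsum (∅ : Finset ℕ) (fun i _ => (iw_pos i).le) summable_iw
  calc (0:ℝ) < iw 0 := iw_pos 0
    _ ≤ ∑' n, iw n := Summable.le_tsum summable_iw 0 (fun i _ => (iw_pos i).le)
    _ = Zc := rfl

lemma sum_iw_le (s : Finset ℕ) : ∑ k ∈ s, iw k ≤ Zc :=
  Summable.sum_le_tsum s (fun i _ => (iw_pos i).le) summable_iw

/-- key two-sided bound: product of inverse weights -/
lemma iw_mul_le {k n : ℕ} (hk : k ≤ n) :
    iw (n-k) * iw k ≤ 3 * (iw n * (iw k + iw (n-k))) := by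
  have h23 : (2:ℝ) ^ ((3:ℝ)/2) ≤ 3 := by
    rw [show ((3:ℝ)/2) = 1 + 1/2 by norm_num, Real.rpow_add (by norm_num), Real.rpow_one,
      ← Real.sqrt_eq_rpow]
    nlinarith [Real.sq_sqrt (by norm_num : (0:ℝ) ≤ 2), Real.sqrt_nonneg 2]
  have key : ∀ m : ℕ, (1:ℝ)+n ≤ 2*((1:ℝ)+m) → iw m ≤ 3 * iw n := by
    intro m hm
    have h1 : (0:ℝ) < 1+n := by positivity
    have h2 : (0:ℝ) < 1+m := by positivity
    have step : iw m ≤ ((((1:ℝ)+n))/2) ^ (-(3:ℝ)/2) := by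
      unfold iw
      apply Real.rpow_le_rpow_of_nonpos (by positivity) (by linarith) (by norm_num)
    have eq1 : ((((1:ℝ)+n))/2) ^ (-(3:ℝ)/2) = (2:ℝ)^((3:ℝ)/2) * iw n := by
      unfold iw
      rw [Real.div_rpow h1.le (by norm_num), div_eq_mul_inv, mul_comm]
      congr 1
      rw [← Real.rpow_neg (by norm_num)]
      congr 1
      ring
    have : iw m ≤ (2:ℝ)^((3:ℝ)/2) * iw n := by rw [← eq1]; exact step
    calc iw m ≤ (2:ℝ)^((3:ℝ)/2) * iw n := this
      _ ≤ 3 * iw n := mul_le_mul_of_nonneg_right h23 (iw_pos n).le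
  rcases le_total ((1:ℝ)+n) (2*((1:ℝ)+k)) with h | h
  · calc iw (n-k) * iw k ≤ iw (n-k) * (3 * iw n) :=
        mul_le_mul_of_nonneg_left (key k h) (iw_pos _).le
      _ = 3 * (iw n * iw (n-k)) := by ring
      _ ≤ 3 * (iw n * (iw k + iw (n-k))) := by
        have := iw_pos k
        have := iw_pos n
        nlinarith
  · have hnk : (1:ℝ)+n ≤ 2*((1:ℝ)+(n-k:ℕ)) := by
      have : ((n-k:ℕ):ℝ) = (n:ℝ)-(k:ℝ) := by rw [Nat.cast_sub hk]
      rw [this]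
      have hkr : (k:ℝ) ≤ n := Nat.cast_le.2 hk
      linarith
    calc iw (n-k) * iw k ≤ (3 * iw n) * iw k :=
        mul_le_mul_of_nonneg_right (key (n-k) hnk) (iw_pos _).le
      _ = 3 * (iw n * iw k) := by ring
      _ ≤ 3 * (iw n * (iw k + iw (n-k))) := by
        have := iw_pos (n-k)
        have := iw_pos n
        nlinarith

/-- generic convolution decay bound -/
lemma conv_bound {a b : ℕ → ℝ} {Ca Cb : ℝ}
    (ha : ∀ m, |a m| ≤ Ca * iw m) (hb : ∀ m, |b m| ≤ Cb * iw m) (n : ℕ) :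
    |∑ k ∈ range (n+1), a (n-k) * b k| ≤ (Ca*Cb*(6*Zc)) * iw n := by
  have hCa : 0 ≤ Ca := by
    have h0 := ha 0; rw [iw_zero, mul_one] at h0; linarith [abs_nonneg (a 0)]
  have hCb : 0 ≤ Cb := by
    have h0 := hb 0; rw [iw_zero, mul_one] at h0; linarith [abs_nonneg (b 0)]
  have step1 : |∑ k ∈ range (n+1), a (n-k) * b k|
      ≤ ∑ k ∈ range (n+1), (Ca*Cb*3) * (iw n * (iw k + iw (n-k))) := by
    refine (Finset.abs_sum_le_sum_abs _ _).trans (Finset.sum_le_sum ?_)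
    intro k hk
    have hk' : k ≤ n := Nat.lt_succ_iff.mp (Finset.mem_range.mp hk)
    rw [abs_mul]
    have t1 := ha (n-k)
    have t2 := hb k
    have p1 := iw_pos (n-k)
    have p2 := iw_pos k
    have p3 := iw_pos n
    have m1 : |a (n-k)| * |b k| ≤ (Ca * iw (n-k)) * (Cb * iw k) :=
      mul_le_mul t1 t2 (abs_nonneg _) (mul_nonneg hCa p1.le)
    have m2 : (Ca*Cb) * (iw (n-k) * iw k) ≤ (Ca*Cb) * (3 * (iw n * (iw k + iw (n-k)))) :=
      mul_le_mul_of_nonneg_left (iw_mul_le hk') (mul_nonneg hCa hCb)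
    nlinarith [m1, m2]
  have hsum : ∑ k ∈ range (n+1), (iw k + iw (n-k)) ≤ 2*Zc := by
    rw [Finset.sum_add_distrib]
    have h1 : ∑ k ∈ range (n+1), iw (n-k) = ∑ k ∈ range (n+1), iw k := by
      rw [← Finset.sum_range_reflect]
      apply Finset.sum_congr rfl
      intro k hk
      have hk2 := Finset.mem_range.mp hk
      congr 1
      omega
    rw [h1]
    linarith [sum_iw_le (range (n+1))]
  have step2 : ∑ k ∈ range (n+1), (Ca*Cb*3) * (iw n * (iw k + iw (n-k)))
      = ((Ca*Cb*3) * iw n) * ∑ k ∈ range (n+1), (iw k + iw (n-k)) := by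
    rw [Finset.mul_sum]
    apply Finset.sum_congr rfl
    intro k _
    ring
  have step3 : ((Ca*Cb*3) * iw n) * (∑ k ∈ range (n+1), (iw k + iw (n-k)))
      ≤ ((Ca*Cb*3) * iw n) * (2*Zc) :=
    mul_le_mul_of_nonneg_left hsum
      (mul_nonneg (mul_nonneg (mul_nonneg hCa hCb) (by norm_num)) (iw_pos n).le)
  calc |∑ k ∈ range (n+1), a (n-k) * b k|
      ≤ ∑ k ∈ range (n+1), (Ca*Cb*3) * (iw n * (iw k + iw (n-k))) := step1
    _ = ((Ca*Cb*3) * iw n) * ∑ k ∈ range (n+1), (iw k + iw (n-k)) := step2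
    _ ≤ ((Ca*Cb*3) * iw n) * (2*Zc) := step3
    _ = (Ca*Cb*(6*Zc)) * iw n := by ring
lemma sq_le_imp {a b : ℝ} (ha : 0 ≤ a) (hb : 0 ≤ b) (h : a^2 ≤ b^2) : a ≤ b := by nlinarith

lemma Esq_lower' (k : ℕ) : 1 ≤ (Real.pi/2) * Ecoef k ^2 * (2*(k:ℝ)+1) := by
  have h := Esq_lower k
  rw [div_le_iff₀ (by positivity : (0:ℝ) < 2*(k:ℝ)+1)] at h
  linarith

lemma Esq_upper' (k : ℕ) : (Real.pi/2) * Ecoef k ^2 * (2*(k:ℝ)+1)^2 ≤ 2*(k:ℝ)+2 := by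
  have h := Esq_upper k
  rw [le_div_iff₀ (by positivity : (0:ℝ) < (2*(k:ℝ)+1)^2)] at h
  linarith

noncomputable def uSeq (n : ℕ) : ℝ := 1 / Real.sqrt (2*(n:ℝ)+1)
noncomputable def rSeq (n : ℕ) : ℝ := uSeq n - Real.sqrt (Real.pi/2) * Ecoef n
noncomputable def gSeq (n : ℕ) : ℝ := ∑ k ∈ range (n+1), sCoef (n-k) * uSeq k

lemma abs_sCoef_le (m : ℕ) : |sCoef m| ≤ 2 * iw m := by
  cases m with
  | zero =>
    rw [iw_zero]
    show |sCoef 0| ≤ 2 * 1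
    rw [show sCoef 0 = 1 from rfl, abs_one]; norm_num
  | succ m =>
    have hrec := Ecoef_succ m
    have hE := Ecoef_pos m
    have hs : sCoef (m+1) = -(Ecoef m / (2*(m:ℝ)+2)) := by
      rw [sCoef_succ]
      field_simp
      nlinarith [hrec]
    rw [hs, abs_neg, abs_of_nonneg (by positivity), iw_eq]
    have hc : (1:ℝ) + ((m+1:ℕ):ℝ) = (m:ℝ)+2 := by push_cast; ring
    rw [hc]
    set x := Real.sqrt ((m:ℝ)+1) with hxdef
    set y := Real.sqrt ((m:ℝ)+2) with hydef
    have hx2 : x^2 = (m:ℝ)+1 := Real.sq_sqrt (by positivity)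
    have hy2 : y^2 = (m:ℝ)+2 := Real.sq_sqrt (by positivity)
    have hx0 : 0 < x := Real.sqrt_pos.2 (by positivity)
    have hy0 : 0 < y := Real.sqrt_pos.2 (by positivity)
    have hs2 : (Real.sqrt 2)^2 = 2 := Real.sq_sqrt (by norm_num)
    have hs0 : (0:ℝ) ≤ Real.sqrt 2 := Real.sqrt_nonneg 2
    have hEb : Ecoef m ≤ Real.sqrt 2 / x := Ecoef_le m
    have hEb' : Ecoef m * x ≤ Real.sqrt 2 := by
      rw [div_eq_mul_inv] at hEb
      calc Ecoef m * x ≤ (Real.sqrt 2 * x⁻¹) * x := mul_le_mul_of_nonneg_right hEb hx0.le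
        _ = Real.sqrt 2 * (x⁻¹ * x) := by ring
        _ = Real.sqrt 2 := by rw [inv_mul_cancel₀ hx0.ne']; ring
    have K : Real.sqrt 2 * (((m:ℝ)+2)*y) ≤ 2*(2*(m:ℝ)+2)*x := by
      apply sq_le_imp (by positivity) (by positivity)
      have expand : (Real.sqrt 2 * (((m:ℝ)+2)*y))^2 = 2*((m:ℝ)+2)^2*((m:ℝ)+2) := by
        rw [mul_pow, mul_pow, hs2, hy2]; ring
      have expand2 : (2*(2*(m:ℝ)+2)*x)^2 = 4*(2*(m:ℝ)+2)^2*((m:ℝ)+1) := by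
        rw [mul_pow, mul_pow, hx2]; ring
      rw [expand, expand2]
      nlinarith [sq_nonneg ((m:ℝ))]
    rw [div_le_iff₀ (by positivity : (0:ℝ) < 2*(m:ℝ)+2), ← div_eq_mul_inv]
    rw [div_mul_eq_mul_div, le_div_iff₀ (by positivity : (0:ℝ) < ((m:ℝ)+2)*y)]
    nlinarith [mul_le_mul_of_nonneg_right hEb' (by positivity : (0:ℝ) ≤ ((m:ℝ)+2)*y), K, hx0,
      mul_pos (by positivity : (0:ℝ) < ((m:ℝ)+2)) hy0]
set_option maxHeartbeats 1000000 in
lemma abs_rSeq_le (k : ℕ) : |rSeq k| ≤ iw k := by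
  have hiw : iw k = (((1:ℝ)+k) * Real.sqrt ((1:ℝ)+k))⁻¹ := iw_eq k
  set a := Real.sqrt (2*(k:ℝ)+1) with hadef
  set b := Real.sqrt (2*(k:ℝ)+2) with hbdef
  set c := Real.sqrt ((1:ℝ)+k) with hcdef
  have ha2 : a^2 = 2*(k:ℝ)+1 := Real.sq_sqrt (by positivity)
  have hb2 : b^2 = 2*(k:ℝ)+2 := Real.sq_sqrt (by positivity)
  have hc2 : c^2 = (1:ℝ)+k := Real.sq_sqrt (by positivity)
  have ha0 : 0 < a := Real.sqrt_pos.2 (by positivity)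
  have hb0 : 0 < b := Real.sqrt_pos.2 (by positivity)
  have hc0 : 0 < c := Real.sqrt_pos.2 (by positivity)
  set q := Real.sqrt (Real.pi/2) * Ecoef k with hqdef
  have hq0 : 0 ≤ q := mul_nonneg (Real.sqrt_nonneg _) (Ecoef_pos k).le
  have hqsq : q^2 = (Real.pi/2) * Ecoef k ^2 := by
    rw [hqdef, mul_pow, Real.sq_sqrt (by positivity : (0:ℝ) ≤ Real.pi/2)]
  -- q * a ≥ 1
  have hqa : 1 ≤ q * a := by
    apply sq_le_imp (by norm_num) (by positivity)
    rw [mul_pow, hqsq, ha2, one_pow]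
    exact Esq_lower' k
  -- q * a^2 ≤ b
  have hqab : q * a^2 ≤ b := by
    apply sq_le_imp (by positivity) hb0.le
    rw [mul_pow, hqsq, ← pow_mul, show 2*2 = 4 from rfl, hb2]
    calc Real.pi/2 * Ecoef k^2 * a^4 = Real.pi/2 * Ecoef k^2 * (a^2)^2 := by ring
      _ = Real.pi/2 * Ecoef k^2 * (2*(k:ℝ)+1)^2 := by rw [ha2]
      _ ≤ 2*(k:ℝ)+2 := Esq_upper' k
  have hu : uSeq k = a⁻¹ := by rw [uSeq, one_div]
  have hr : rSeq k = a⁻¹ - q := by rw [rSeq, hu]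
  have haa : a * a⁻¹ = 1 := mul_inv_cancel₀ ha0.ne'
  -- a⁻¹ ≤ q
  have hinvq : a⁻¹ ≤ q := by
    nlinarith [mul_le_mul_of_nonneg_right hqa (inv_pos.2 ha0).le]
  have hiwpos := iw_pos k
  rw [abs_le]
  constructor
  · -- -iw k ≤ rSeq k, i.e. q - a⁻¹ ≤ iw k
    rw [hr, neg_le, neg_sub]
    rw [hiw]
    have hM0 : 0 ≤ q - a⁻¹ := by linarith
    have hba : (b - a) * (a + b) = 1 := by linear_combination hb2 - ha2
    have hab : a ≤ b := sq_le_imp ha0.le hb0.le (by rw [ha2, hb2]; linarith)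
    have h2ab : 2*a*(b-a) ≤ 1 := by nlinarith [hba, sq_nonneg (b-a)]
    have hca : c ≤ a := sq_le_imp hc0.le ha0.le
      (by rw [hc2, ha2]; linarith [Nat.cast_nonneg (α := ℝ) k])
    have h1k : (1:ℝ)+k ≤ a^2 := by rw [ha2]; linarith [Nat.cast_nonneg (α := ℝ) k]
    -- (q - a⁻¹) * ((1+k)*c) ≤ 1
    have key : (q - a⁻¹) * (((1:ℝ)+k)*c) ≤ 1 := by
      have hc3 : ((1:ℝ)+k)*c ≤ 2*a^3 := by
        have u1 : ((1:ℝ)+k)*c ≤ a^2*c := mul_le_mul_of_nonneg_right h1k hc0.le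
        have u2 : a^2*c ≤ a^2*a := mul_le_mul_of_nonneg_left hca (sq_nonneg a)
        nlinarith [pow_pos ha0 3]
      have step1 : (q - a⁻¹) * (((1:ℝ)+k)*c) ≤ (q - a⁻¹) * (2*a^3) :=
        mul_le_mul_of_nonneg_left hc3 hM0
      have step2 : (q - a⁻¹) * (2*a^3) = 2*a*(q*a^2) - 2*a^2*(a*a⁻¹) := by ring
      have step3 : (q - a⁻¹) * (2*a^3) ≤ 2*a*b - 2*a^2 := by
        rw [step2, haa]
        nlinarith [mul_le_mul_of_nonneg_left hqab (by positivity : (0:ℝ) ≤ 2*a)]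
      nlinarith
    rw [show (((1:ℝ)+k) * c)⁻¹ = 1/(((1:ℝ)+k)*c) from (one_div _).symm,
      le_div_iff₀ (mul_pos (by positivity) hc0)]
    linarith [key]
  · -- rSeq k ≤ iw k : rSeq k ≤ 0 ≤ iw k
    rw [hr]
    linarith

lemma abs_uSeq_le (k : ℕ) : |uSeq k| ≤ 1 := by
  rw [uSeq, abs_of_nonneg (by positivity)]
  rw [div_le_one (by positivity : 0 < Real.sqrt (2*(k:ℝ)+1))]
  have : (1:ℝ) = Real.sqrt 1 := by rw [Real.sqrt_one]
  rw [this]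
  apply Real.sqrt_le_sqrt
  push_cast
  linarith [Nat.cast_nonneg (α := ℝ) k]
lemma nonneg_of_abs_le_iw {x : ℕ → ℝ} {C : ℝ} (hx : ∀ n, |x n| ≤ C * iw n) : 0 ≤ C := by
  have h0 := hx 0
  rw [iw_zero, mul_one] at h0
  linarith [abs_nonneg (x 0)]

lemma summable_abs_of_le_iw {x : ℕ → ℝ} {C : ℝ} (hx : ∀ n, |x n| ≤ C * iw n) :
    Summable (fun n => |x n|) :=
  Summable.of_nonneg_of_le (fun n => abs_nonneg _) hx (summable_iw.mul_left C)

lemma summable_of_le_iw {x : ℕ → ℝ} {C : ℝ} (hx : ∀ n, |x n| ≤ C * iw n) : Summable x :=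
  (summable_abs_of_le_iw hx).of_abs

lemma abs_rSeq_le' (m : ℕ) : |rSeq m| ≤ 1 * iw m := by
  rw [one_mul]; exact abs_rSeq_le m

lemma conv_sE (n : ℕ) :
    ∑ k ∈ range (n+1), sCoef (n-k) * Ecoef k = if n = 0 then 1 else 0 := by
  rw [← conv_Es n, ← Finset.sum_range_reflect]
  apply Finset.sum_congr rfl
  intro k hk
  have hk' := Finset.mem_range.mp hk
  have h1 : n + 1 - 1 - k = n - k := by omega
  have h2 : n - (n - k) = k := by omega
  rw [h1, h2, mul_comm]

lemma gSeq_eq (n : ℕ) : gSeq n = (if n = 0 then Real.sqrt (Real.pi/2) else 0)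
    + ∑ k ∈ range (n+1), sCoef (n-k) * rSeq k := by
  unfold gSeq
  have : ∀ k ∈ range (n+1), sCoef (n-k) * uSeq k
      = Real.sqrt (Real.pi/2) * (sCoef (n-k) * Ecoef k) + sCoef (n-k) * rSeq k := by
    intro k _
    rw [rSeq]
    ring
  rw [Finset.sum_congr rfl this, Finset.sum_add_distrib, ← Finset.mul_sum, conv_sE]
  by_cases h : n = 0 <;> simp [h]

noncomputable def Cg : ℝ := Real.sqrt (Real.pi/2) + 2*1*(6*Zc)

lemma abs_gSeq_le (n : ℕ) : |gSeq n| ≤ Cg * iw n := by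
  rw [gSeq_eq]
  have h1 : |∑ k ∈ range (n+1), sCoef (n-k) * rSeq k| ≤ (2*1*(6*Zc)) * iw n :=
    conv_bound abs_sCoef_le abs_rSeq_le' n
  have h2 : |if n = 0 then Real.sqrt (Real.pi/2) else 0| ≤ Real.sqrt (Real.pi/2) * iw n := by
    by_cases h : n = 0
    · subst h; rw [if_pos rfl, iw_zero, mul_one, abs_of_nonneg (Real.sqrt_nonneg _)]
    · rw [if_neg h, abs_zero]
      exact mul_nonneg (Real.sqrt_nonneg _) (iw_pos n).le
  calc |(if n = 0 then Real.sqrt (Real.pi/2) else 0) + ∑ k ∈ range (n+1), sCoef (n-k) * rSeq k|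
      ≤ |if n = 0 then Real.sqrt (Real.pi/2) else 0|
        + |∑ k ∈ range (n+1), sCoef (n-k) * rSeq k| := abs_add_le _ _
    _ ≤ Real.sqrt (Real.pi/2) * iw n + (2*1*(6*Zc)) * iw n := add_le_add h2 h1
    _ = Cg * iw n := by rw [Cg]; ring

lemma conv_Eg (n : ℕ) : ∑ k ∈ range (n+1), Ecoef (n-k) * gSeq k = uSeq n :=
  conv_inv uSeq n

lemma Ecoef_tendsto_zero : Filter.Tendsto Ecoef Filter.atTop (nhds 0) := by
  have hb : ∀ n : ℕ, Ecoef n ≤ Real.sqrt (2/((n:ℝ)+1)) := by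
    intro n
    rw [Real.sqrt_div (by norm_num : (0:ℝ) ≤ 2)]
    exact Ecoef_le n
  have hlim : Filter.Tendsto (fun n : ℕ => Real.sqrt (2/((n:ℝ)+1))) Filter.atTop (nhds 0) := by
    have h0 : Filter.Tendsto (fun n : ℕ => 2/((n:ℝ)+1)) Filter.atTop (nhds 0) := by
      have := tendsto_one_div_add_atTop_nhds_zero_nat (𝕜 := ℝ)
      have h2 := this.const_mul (2:ℝ)
      simp only [mul_zero] at h2
      apply h2.congr
      intro n
      push_cast
      ring
    have h3 := (Real.continuous_sqrt.tendsto 0).comp h0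
    rw [Real.sqrt_zero] at h3
    exact h3
  exact squeeze_zero (fun n => (Ecoef_pos n).le) hb hlim

lemma tsum_sCoef : ∑' m, sCoef m = 0 := by
  have hsum : Summable sCoef := summable_of_le_iw abs_sCoef_le
  have hpartial : ∀ N : ℕ, ∑ m ∈ range (N+1), sCoef m = Ecoef N := by
    intro N
    induction N with
    | zero => simp [sCoef, Ecoef_zero]
    | succ N ih => rw [Finset.sum_range_succ, ih, sCoef_succ]; ring
  have h1 : Filter.Tendsto (fun N : ℕ => ∑ m ∈ range N, sCoef m) Filter.atTop (nhds 0) := by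
    rw [← Filter.tendsto_add_atTop_iff_nat 1]
    have : (fun N : ℕ => ∑ m ∈ range (N+1), sCoef m) = Ecoef := funext hpartial
    rw [this]
    exact Ecoef_tendsto_zero
  exact tendsto_nhds_unique hsum.hasSum.tendsto_sum_nat h1

lemma summable_abs_rSeq : Summable (fun n => |rSeq n|) :=
  summable_abs_of_le_iw abs_rSeq_le'

lemma tsum_gSeq : ∑' n, gSeq n = Real.sqrt (Real.pi/2) := by
  have hs : Summable (fun n => ‖sCoef n‖) := by
    simpa [Real.norm_eq_abs] using summable_abs_of_le_iw abs_sCoef_le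
  have hr : Summable (fun n => ‖rSeq n‖) := by
    simpa [Real.norm_eq_abs] using summable_abs_rSeq
  have cauchy := tsum_mul_tsum_eq_tsum_sum_range_of_summable_norm hs hr
  rw [tsum_sCoef, zero_mul] at cauchy
  have hc_eq : ∀ n : ℕ, (∑ k ∈ range (n+1), sCoef k * rSeq (n-k))
      = ∑ k ∈ range (n+1), sCoef (n-k) * rSeq k := by
    intro n
    rw [← Finset.sum_range_reflect]
    apply Finset.sum_congr rfl
    intro k hk
    have hk' := Finset.mem_range.mp hk
    have h1 : n + 1 - 1 - k = n - k := by omega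
    have h2 : n - (n - k) = k := by omega
    rw [h1, h2]
  have hcsum : Summable (fun n => ∑ k ∈ range (n+1), sCoef (n-k) * rSeq k) := by
    apply summable_of_le_iw (C := 2*1*(6*Zc))
    intro n
    exact conv_bound abs_sCoef_le abs_rSeq_le' n
  have hczero : ∑' n, (∑ k ∈ range (n+1), sCoef (n-k) * rSeq k) = 0 := by
    rw [← tsum_congr hc_eq]
    exact cauchy.symm
  have hdelta : Summable (fun n : ℕ => if n = 0 then Real.sqrt (Real.pi/2) else 0) :=
    (hasSum_ite_eq 0 (Real.sqrt (Real.pi/2))).summable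
  have hg : gSeq = fun n => (if n = 0 then Real.sqrt (Real.pi/2) else 0)
      + ∑ k ∈ range (n+1), sCoef (n-k) * rSeq k := funext gSeq_eq
  rw [hg, Summable.tsum_add hdelta hcsum, hczero, add_zero, tsum_ite_eq]
noncomputable def wt (n : ℕ) : ℝ := ((1:ℝ) + n) ^ (2*((3:ℝ)/4))

lemma InEll2_def (f : ℕ → ℝ) : InEll2 (3/4) f ↔ Summable (fun n => wt n * f n ^2) := Iff.rfl

lemma ell2Norm_def (f : ℕ → ℝ) : ell2Norm (3/4) f = Real.sqrt (∑' n, wt n * f n ^2) := rfl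

lemma wt_pos (n : ℕ) : 0 < wt n := Real.rpow_pos_of_pos (by positivity) _

lemma wt_mul_iw (n : ℕ) : wt n * iw n = 1 := by
  rw [wt, iw, ← Real.rpow_add (by positivity : (0:ℝ) < 1 + n)]
  norm_num

lemma term_nonneg (f : ℕ → ℝ) (n : ℕ) : 0 ≤ wt n * f n ^2 :=
  mul_nonneg (wt_pos n).le (sq_nonneg _)

noncomputable def tsq (f : ℕ → ℝ) : ℝ := ∑' n, wt n * f n ^2

lemma tsq_nonneg (f : ℕ → ℝ) : 0 ≤ tsq f := tsum_nonneg (term_nonneg f)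

lemma ell2Norm_nonneg (f : ℕ → ℝ) : 0 ≤ ell2Norm (3/4) f := Real.sqrt_nonneg _

lemma ell2Norm_sq {f : ℕ → ℝ} : (ell2Norm (3/4) f)^2 = tsq f := by
  rw [ell2Norm_def]
  exact Real.sq_sqrt (tsq_nonneg f)

lemma sum_tsq_le {f : ℕ → ℝ} (hf : InEll2 (3/4) f) (s : Finset ℕ) :
    ∑ n ∈ s, wt n * f n ^2 ≤ tsq f :=
  Summable.sum_le_tsum s (fun n _ => term_nonneg f n) hf

lemma InEll2_of_le_iw {x : ℕ → ℝ} {C : ℝ} (hx : ∀ n, |x n| ≤ C * iw n) : InEll2 (3/4) x := by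
  have hC := nonneg_of_abs_le_iw hx
  rw [InEll2_def]
  apply Summable.of_nonneg_of_le (term_nonneg x) _ (summable_iw.mul_left (C^2))
  intro n
  have h1 : x n ^2 ≤ (C * iw n)^2 := by
    rw [← sq_abs (x n)]
    apply pow_le_pow_left₀ (abs_nonneg _) (hx n)
  calc wt n * x n^2 ≤ wt n * (C*iw n)^2 := mul_le_mul_of_nonneg_left h1 (wt_pos n).le
    _ = C^2 * ((wt n * iw n) * iw n) := by ring
    _ = C^2 * iw n := by rw [wt_mul_iw, one_mul]

lemma InEll2_gSeq : InEll2 (3/4) gSeq := InEll2_of_le_iw abs_gSeq_le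

lemma cs_cross {f g : ℕ → ℝ} (hf : InEll2 (3/4) f) (hg : InEll2 (3/4) g) (s : Finset ℕ) :
    ∑ n ∈ s, wt n * (f n * g n) ≤ ell2Norm (3/4) f * ell2Norm (3/4) g := by
  have heq : ∀ n, wt n * (f n * g n)
      = (Real.sqrt (wt n) * f n) * (Real.sqrt (wt n) * g n) := by
    intro n
    have h := Real.mul_self_sqrt (wt_pos n).le
    conv_lhs => rw [← h]
    ring
  have hsq : ∀ (h : ℕ → ℝ), ∀ n, (Real.sqrt (wt n) * h n)^2 = wt n * h n ^2 := by
    intro h n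
    rw [mul_pow, Real.sq_sqrt (wt_pos n).le]
  have cs := Finset.sum_mul_sq_le_sq_mul_sq s (fun n => Real.sqrt (wt n) * f n)
    (fun n => Real.sqrt (wt n) * g n)
  simp only [hsq] at cs
  have hF := sum_tsq_le hf s
  have hG := sum_tsq_le hg s
  have hFn : (0:ℝ) ≤ ∑ n ∈ s, wt n * f n^2 := Finset.sum_nonneg (fun n _ => term_nonneg f n)
  have hGn : (0:ℝ) ≤ ∑ n ∈ s, wt n * g n^2 := Finset.sum_nonneg (fun n _ => term_nonneg g n)
  have key : (∑ n ∈ s, wt n * (f n * g n))^2 ≤ tsq f * tsq g := by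
    calc (∑ n ∈ s, wt n * (f n * g n))^2
        = (∑ n ∈ s, (Real.sqrt (wt n) * f n) * (Real.sqrt (wt n) * g n))^2 := by
          rw [Finset.sum_congr rfl (fun n _ => heq n)]
      _ ≤ (∑ n ∈ s, wt n * f n^2) * ∑ n ∈ s, wt n * g n^2 := cs
      _ ≤ tsq f * tsq g := mul_le_mul hF hG hGn (tsq_nonneg f)
  calc ∑ n ∈ s, wt n * (f n * g n) ≤ |∑ n ∈ s, wt n * (f n * g n)| := le_abs_self _
    _ = Real.sqrt ((∑ n ∈ s, wt n * (f n * g n))^2) := (Real.sqrt_sq_eq_abs _).symm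
    _ ≤ Real.sqrt (tsq f * tsq g) := Real.sqrt_le_sqrt key
    _ = ell2Norm (3/4) f * ell2Norm (3/4) g := by
      rw [Real.sqrt_mul (tsq_nonneg f), ell2Norm_def, ell2Norm_def]
      rfl

lemma sum_add_sq_le {f g : ℕ → ℝ} (hf : InEll2 (3/4) f) (hg : InEll2 (3/4) g) (s : Finset ℕ) :
    ∑ n ∈ s, wt n * (f n + g n)^2 ≤ (ell2Norm (3/4) f + ell2Norm (3/4) g)^2 := by
  have expand : ∀ n, wt n * (f n + g n)^2
      = wt n * f n^2 + 2 * (wt n * (f n * g n)) + wt n * g n^2 := by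
    intro n; ring
  rw [Finset.sum_congr rfl (fun n _ => expand n), Finset.sum_add_distrib,
    Finset.sum_add_distrib, ← Finset.mul_sum]
  have h1 := sum_tsq_le hf s
  have h2 := sum_tsq_le hg s
  have h3 := cs_cross hf hg s
  have hNf : (ell2Norm (3/4) f)^2 = tsq f := ell2Norm_sq
  have hNg : (ell2Norm (3/4) g)^2 = tsq g := ell2Norm_sq
  nlinarith [h1, h2, h3]

lemma InEll2_add {f g : ℕ → ℝ} (hf : InEll2 (3/4) f) (hg : InEll2 (3/4) g) :
    InEll2 (3/4) (fun n => f n + g n) := by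
  rw [InEll2_def]
  apply summable_of_sum_le (term_nonneg _)
  intro s
  exact sum_add_sq_le hf hg s

lemma ell2Norm_add_le {f g : ℕ → ℝ} (hf : InEll2 (3/4) f) (hg : InEll2 (3/4) g) :
    ell2Norm (3/4) (fun n => f n + g n) ≤ ell2Norm (3/4) f + ell2Norm (3/4) g := by
  rw [ell2Norm_def]
  have hb : ∑' n, wt n * (f n + g n)^2 ≤ (ell2Norm (3/4) f + ell2Norm (3/4) g)^2 :=
    Summable.tsum_le_of_sum_le (InEll2_add hf hg) (sum_add_sq_le hf hg)
  calc Real.sqrt (∑' n, wt n * (f n + g n)^2)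
      ≤ Real.sqrt ((ell2Norm (3/4) f + ell2Norm (3/4) g)^2) := Real.sqrt_le_sqrt hb
    _ = |ell2Norm (3/4) f + ell2Norm (3/4) g| := Real.sqrt_sq_eq_abs _
    _ = ell2Norm (3/4) f + ell2Norm (3/4) g := by
      rw [abs_of_nonneg (by linarith [ell2Norm_nonneg f, ell2Norm_nonneg g])]

lemma InEll2_smul {f : ℕ → ℝ} (c : ℝ) (hf : InEll2 (3/4) f) :
    InEll2 (3/4) (fun n => c * f n) := by
  rw [InEll2_def]
  have : (fun n => wt n * (c * f n)^2) = (fun n => c^2 * (wt n * f n^2)) := by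
    funext n; ring
  rw [this]
  exact hf.mul_left _

lemma ell2Norm_smul (c : ℝ) (f : ℕ → ℝ) :
    ell2Norm (3/4) (fun n => c * f n) = |c| * ell2Norm (3/4) f := by
  rw [ell2Norm_def, ell2Norm_def]
  have : (fun n => wt n * (c * f n)^2) = (fun n => c^2 * (wt n * f n^2)) := by
    funext n; ring
  rw [this, tsum_mul_left, Real.sqrt_mul (sq_nonneg c), Real.sqrt_sq_eq_abs]

lemma abs_sum_partial_le {f : ℕ → ℝ} (hf : InEll2 (3/4) f) (s : Finset ℕ) :
    ∑ n ∈ s, |f n| ≤ Real.sqrt Zc * ell2Norm (3/4) f := by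
  have heq : ∀ n, |f n| = Real.sqrt (iw n) * (Real.sqrt (wt n) * |f n|) := by
    intro n
    rw [← mul_assoc, ← Real.sqrt_mul (iw_pos n).le, mul_comm (iw n), wt_mul_iw, Real.sqrt_one,
      one_mul]
  have cs := Finset.sum_mul_sq_le_sq_mul_sq s (fun n => Real.sqrt (iw n))
    (fun n => Real.sqrt (wt n) * |f n|)
  have hsq1 : ∀ n, (Real.sqrt (iw n))^2 = iw n := fun n => Real.sq_sqrt (iw_pos n).le
  have hsq2 : ∀ n, (Real.sqrt (wt n) * |f n|)^2 = wt n * f n^2 := by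
    intro n
    rw [mul_pow, Real.sq_sqrt (wt_pos n).le, sq_abs]
  simp only [hsq1, hsq2] at cs
  have h1 : ∑ n ∈ s, iw n ≤ Zc := sum_iw_le s
  have h2 := sum_tsq_le hf s
  have hn1 : (0:ℝ) ≤ ∑ n ∈ s, wt n * f n^2 := Finset.sum_nonneg (fun n _ => term_nonneg f n)
  have key : (∑ n ∈ s, |f n|)^2 ≤ Zc * tsq f := by
    calc (∑ n ∈ s, |f n|)^2
        = (∑ n ∈ s, Real.sqrt (iw n) * (Real.sqrt (wt n) * |f n|))^2 := by
          rw [Finset.sum_congr rfl (fun n _ => heq n)]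
      _ ≤ (∑ n ∈ s, iw n) * ∑ n ∈ s, wt n * f n^2 := cs
      _ ≤ Zc * tsq f := mul_le_mul h1 h2 hn1 Zc_pos.le
  calc ∑ n ∈ s, |f n|
      = Real.sqrt ((∑ n ∈ s, |f n|)^2) :=
        (Real.sqrt_sq (Finset.sum_nonneg (fun n _ => abs_nonneg _))).symm
    _ ≤ Real.sqrt (Zc * tsq f) := Real.sqrt_le_sqrt key
    _ = Real.sqrt Zc * ell2Norm (3/4) f := by
      rw [Real.sqrt_mul Zc_pos.le, ell2Norm_def]
      rfl

lemma summable_abs_of_ell2 {f : ℕ → ℝ} (hf : InEll2 (3/4) f) : Summable (fun n => |f n|) :=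
  summable_of_sum_le (fun n => abs_nonneg _) (abs_sum_partial_le hf)

lemma summable_of_ell2 {f : ℕ → ℝ} (hf : InEll2 (3/4) f) : Summable f :=
  (summable_abs_of_ell2 hf).of_abs

lemma tsum_abs_le {f : ℕ → ℝ} (hf : InEll2 (3/4) f) :
    (∑' n, |f n|) ≤ Real.sqrt Zc * ell2Norm (3/4) f :=
  Summable.tsum_le_of_sum_le (summable_abs_of_ell2 hf) (abs_sum_partial_le hf)

lemma abs_tsum_le' {f : ℕ → ℝ} (hf : InEll2 (3/4) f) :
    |∑' n, f n| ≤ Real.sqrt Zc * ell2Norm (3/4) f := by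
  have h1 : |∑' n, f n| ≤ (∑' n, |f n|) := by
    have hs : Summable (fun n => ‖f n‖) := by
      simpa [Real.norm_eq_abs] using summable_abs_of_ell2 hf
    have h := norm_tsum_le_tsum_norm hs
    simpa [Real.norm_eq_abs] using h
  exact h1.trans (tsum_abs_le hf)

lemma rep_zero {φ : ℕ → ℝ} (h : ∀ n, ∑ k ∈ range (n+1), Ecoef (n-k) * φ k = 0) :
    ∀ n, φ n = 0 := by
  intro n
  induction n using Nat.strong_induction_on with
  | _ n ih =>
    have hn := h n
    rw [Finset.sum_range_succ] at hn
    have hz : ∑ k ∈ range n, Ecoef (n-k) * φ k = 0 :=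
      Finset.sum_eq_zero (fun k hk => by rw [ih k (Finset.mem_range.mp hk), mul_zero])
    rw [hz, Nat.sub_self, Ecoef_zero, zero_add, one_mul] at hn
    exact hn

lemma rep_unique {f f' : ℕ → ℝ}
    (h : ∀ n, ∑ k ∈ range (n+1), Ecoef (n-k) * f k
      = ∑ k ∈ range (n+1), Ecoef (n-k) * f' k) : f = f' := by
  have hz := rep_zero (φ := fun k => f k - f' k) (fun n => by
    have : ∑ k ∈ range (n+1), Ecoef (n-k) * (f k - f' k)
        = (∑ k ∈ range (n+1), Ecoef (n-k) * f k)
          - ∑ k ∈ range (n+1), Ecoef (n-k) * f' k := by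
      rw [← Finset.sum_sub_distrib]
      apply Finset.sum_congr rfl
      intro k _
      ring
    rw [this, h n, sub_self])
  funext n
  have := hz n
  linarith

lemma Hnorm_eq {h f : ℕ → ℝ} (hf : InEll2 (3/4) f)
    (hrep : ∀ n, h n = ∑ k ∈ range (n+1), Ecoef (n-k) * f k) :
    Hnorm h = ell2Norm (3/4) f := by
  have hh : InH h := ⟨f, hf, hrep⟩
  unfold Hnorm
  rw [dif_pos hh]
  obtain ⟨hf0, hrep0⟩ := Classical.choose_spec hh
  have heq : Classical.choose hh = f :=
    rep_unique (fun n => by rw [← hrep0 n, ← hrep n])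
  rw [heq]

lemma rep_linear (v : ℝ) (f0 : ℕ → ℝ) (n : ℕ) :
    ∑ k ∈ range (n+1), Ecoef (n-k) * (v * gSeq k + f0 k)
      = v * uSeq n + ∑ k ∈ range (n+1), Ecoef (n-k) * f0 k := by
  have : ∀ k ∈ range (n+1), Ecoef (n-k) * (v * gSeq k + f0 k)
      = v * (Ecoef (n-k) * gSeq k) + Ecoef (n-k) * f0 k := by
    intro k _; ring
  rw [Finset.sum_congr rfl this, Finset.sum_add_distrib, ← Finset.mul_sum, conv_Eg]

lemma pc_nonneg : 0 ≤ (Real.pi/2) ^ (-(1:ℝ)/2) :=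
  (Real.rpow_pos_of_pos (by positivity) _).le

lemma pc_mul_sqrt : (Real.pi/2) ^ (-(1:ℝ)/2) * Real.sqrt (Real.pi/2) = 1 := by
  rw [Real.sqrt_eq_rpow, ← Real.rpow_add (by positivity : (0:ℝ) < Real.pi/2)]
  norm_num

lemma summable_gSeq : Summable gSeq := summable_of_le_iw abs_gSeq_le

lemma div_sqrt_eq (v : ℝ) (n : ℕ) : v / Real.sqrt (2*(n:ℝ)+1) = v * uSeq n := by
  rw [uSeq, mul_one_div]

/-- For every `h ∈ ℋ` there are unique `v ∈ ℝ` and `h⁰ ∈ ℋ₀` with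
`h_n = v/√(2n+1) + h⁰_n`; moreover `v = (π/2)^{-1/2} ∑ f_k` where `f` represents `h`, and
`h ↦ (v, h⁰)` is a bounded linear isomorphism of `ℋ` onto `ℝ × ℋ₀` with bounded inverse. -/
theorem stmt3 :
    ∃ C₁ > 0, ∃ C₂ > 0,
      (∀ h : ℕ → ℝ, InH h →
        (∃! vh : ℝ × (ℕ → ℝ), InH0 vh.2 ∧
            ∀ n : ℕ, h n = vh.1 / Real.sqrt (2*(n:ℝ)+1) + vh.2 n) ∧
        (∀ (f : ℕ → ℝ) (v : ℝ) (h0 : ℕ → ℝ),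
          InEll2 (3/4) f →
          (∀ n, h n = ∑ k ∈ Finset.range (n+1), Ecoef (n-k) * f k) →
          InH0 h0 → (∀ n : ℕ, h n = v / Real.sqrt (2*(n:ℝ)+1) + h0 n) →
          Summable f ∧ v = (Real.pi/2) ^ (-(1:ℝ)/2) * (∑' k, f k) ∧
          |v| + Hnorm h0 ≤ C₁ * Hnorm h ∧
          Hnorm h ≤ C₂ * (|v| + Hnorm h0))) ∧
      (∀ (v : ℝ) (h0 : ℕ → ℝ), InH0 h0 →
        InH (fun n : ℕ => v / Real.sqrt (2*(n:ℝ)+1) + h0 n)) := by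
  set pc := (Real.pi/2) ^ (-(1:ℝ)/2) with hpc
  set Ng := ell2Norm (3/4) gSeq with hNg
  set Cv := pc * Real.sqrt Zc with hCv
  have hNg0 : 0 ≤ Ng := ell2Norm_nonneg gSeq
  have hCv0 : 0 ≤ Cv := mul_nonneg pc_nonneg (Real.sqrt_nonneg _)
  refine ⟨Cv + Cv*Ng + 2, by positivity, 1 + Ng, by positivity, ?_, ?_⟩
  · -- main part
    intro h hh
    obtain ⟨f, hf, hrep⟩ := hh
    set v := pc * ∑' k, f k with hv
    set f0 : ℕ → ℝ := fun k => f k + (-v) * gSeq k with hf0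
    set h0 : ℕ → ℝ := fun n => h n - v * uSeq n with hh0
    have hf0ell : InEll2 (3/4) f0 := InEll2_add hf (InEll2_smul (-v) InEll2_gSeq)
    have hrep0 : ∀ n, h0 n = ∑ k ∈ range (n+1), Ecoef (n-k) * f0 k := by
      intro n
      have : ∑ k ∈ range (n+1), Ecoef (n-k) * f0 k
          = ∑ k ∈ range (n+1), Ecoef (n-k) * ((-v) * gSeq k + f k) := by
        apply Finset.sum_congr rfl
        intro k _
        simp only [hf0]
        ring
      rw [this, rep_linear, ← hrep n]
      simp only [hh0]
      ring
    have htsum_f0 : (∑' k, f0 k) = 0 := by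
      have hsg : Summable (fun k => (-v) * gSeq k) := summable_gSeq.mul_left _
      have hsf : Summable f := summable_of_ell2 hf
      rw [hf0, Summable.tsum_add hsf hsg, tsum_mul_left, tsum_gSeq]
      have : v * Real.sqrt (Real.pi/2) = ∑' k, f k := by
        rw [hv, mul_comm pc, mul_assoc, pc_mul_sqrt, mul_one]
      nlinarith [this]
    have hInH0 : InH0 h0 :=
      ⟨f0, hf0ell, summable_abs_of_ell2 hf0ell, htsum_f0, hrep0⟩
    have hdec : ∀ n : ℕ, h n = v / Real.sqrt (2*(n:ℝ)+1) + h0 n := by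
      intro n
      rw [div_sqrt_eq]
      simp only [hh0]
      ring
    -- uniqueness helper: any valid decomposition coincides
    have huniq : ∀ (v' : ℝ) (h0' : ℕ → ℝ), InH0 h0' →
        (∀ n : ℕ, h n = v' / Real.sqrt (2*(n:ℝ)+1) + h0' n) →
        v' = v ∧ h0' = h0 := by
      intro v' h0' hH0' hdec'
      obtain ⟨f0', he', hab', hs0', hrep'⟩ := hH0'
      have hrepF : ∀ n, ∑ k ∈ range (n+1), Ecoef (n-k) * f k
          = ∑ k ∈ range (n+1), Ecoef (n-k) * (v' * gSeq k + f0' k) := by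
        intro n
        rw [rep_linear, ← hrep' n, ← hrep n, hdec' n, div_sqrt_eq]
      have hfeq : f = fun k => v' * gSeq k + f0' k := rep_unique hrepF
      have htsum : (∑' k, f k) = v' * Real.sqrt (Real.pi/2) := by
        rw [hfeq, Summable.tsum_add (summable_gSeq.mul_left v') hab'.of_abs, tsum_mul_left,
          tsum_gSeq, hs0', add_zero]
      have hv' : v' = v := by
        rw [hv, htsum, ← mul_assoc, mul_comm pc v', mul_assoc, pc_mul_sqrt, mul_one]
      refine ⟨hv', ?_⟩
      funext n
      have e1 := hdec n
      have e2 := hdec' n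
      rw [hv'] at e2
      simp only [hh0]
      rw [div_sqrt_eq] at e1 e2
      linarith
    constructor
    · -- existence and uniqueness
      refine ⟨(v, h0), ⟨hInH0, hdec⟩, ?_⟩
      rintro ⟨v', h0'⟩ ⟨hH0', hdec'⟩
      obtain ⟨hv', hh0'⟩ := huniq v' h0' hH0' hdec'
      simp only [Prod.mk.injEq]
      exact ⟨hv', hh0'⟩
    · -- quantitative part
      intro f₁ v₁ h0₁ hf₁ hrep₁ hH0₁ hdec₁
      have hfeq : f₁ = f := rep_unique (fun n => by rw [← hrep₁ n, ← hrep n])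
      subst hfeq
      obtain ⟨hv₁, hh0₁⟩ := huniq v₁ h0₁ hH0₁ hdec₁
      have hHh : Hnorm h = ell2Norm (3/4) f₁ := Hnorm_eq hf₁ hrep
      have hHh0 : Hnorm h0₁ = ell2Norm (3/4) f0 := by
        rw [hh0₁]
        exact Hnorm_eq hf0ell hrep0
      set Nf := ell2Norm (3/4) f₁ with hNf
      have hNf0 : 0 ≤ Nf := ell2Norm_nonneg f₁
      have habsv : |v₁| ≤ Cv * Nf := by
        rw [hv₁, hv, abs_mul, abs_of_nonneg pc_nonneg]
        calc pc * |∑' k, f₁ k| ≤ pc * (Real.sqrt Zc * Nf) :=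
            mul_le_mul_of_nonneg_left (abs_tsum_le' hf₁) pc_nonneg
          _ = Cv * Nf := by rw [hCv]; ring
      have hNf0b : ell2Norm (3/4) f0 ≤ Nf + |v₁| * Ng := by
        calc ell2Norm (3/4) f0 ≤ Nf + ell2Norm (3/4) (fun k => (-v) * gSeq k) :=
            ell2Norm_add_le hf₁ (InEll2_smul (-v) InEll2_gSeq)
          _ = Nf + |v| * Ng := by rw [ell2Norm_smul, abs_neg]
          _ = Nf + |v₁| * Ng := by rw [hv₁]
      refine ⟨summable_of_ell2 hf₁, by rw [hv₁, hv], ?_, ?_⟩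
      · rw [hHh0, hHh]
        have hstep : |v₁| * Ng ≤ (Cv * Nf) * Ng := mul_le_mul_of_nonneg_right habsv hNg0
        nlinarith [hNf0b, habsv, hstep, hNf0]
      · rw [hHh0, hHh]
        have hfsplit : f₁ = fun k => f0 k + v₁ * gSeq k := by
          funext k
          simp only [hf0]
          rw [hv₁]
          ring
        have hb : Nf ≤ ell2Norm (3/4) f0 + |v₁| * Ng := by
          conv_lhs => rw [hNf, hfsplit]
          calc ell2Norm (3/4) (fun k => f0 k + v₁ * gSeq k)
              ≤ ell2Norm (3/4) f0 + ell2Norm (3/4) (fun k => v₁ * gSeq k) :=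
              ell2Norm_add_le hf0ell (InEll2_smul v₁ InEll2_gSeq)
            _ = ell2Norm (3/4) f0 + |v₁| * Ng := by rw [ell2Norm_smul]
        have hN0 : 0 ≤ ell2Norm (3/4) f0 := ell2Norm_nonneg f0
        nlinarith [abs_nonneg v₁, hb, hN0, hNg0]
  · -- surjectivity part
    intro v h0 hH0
    obtain ⟨f0, he0, hab0, hs0, hrep0⟩ := hH0
    refine ⟨fun k => v * gSeq k + f0 k, InEll2_add (InEll2_smul v InEll2_gSeq) he0, ?_⟩
    intro n
    rw [rep_linear, ← hrep0 n]
    show v / Real.sqrt (2*(n:ℝ)+1) + h0 n = v * uSeq n + h0 n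
    rw [div_sqrt_eq]
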